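/- arXiv:1705.08035 — 6 statements merged into one kernel-verified Lean document; each statement's English description precedes it below -/
import Mathlib

section
/- Let R be an associative ring whose additive group has no p-torsion (p·x = 0 implies x = 0), where p is a prime. Let z, w ∈ R be elements whose images in R/pR are central (i.e., zx − xz ∈ pR and wx − xw ∈ pR for all x ∈ R), and let u ∈ R satisfy p·u = zw − wz. Then the image of u in R/pR is central, i.e., ux − xu ∈ pR for all x ∈ R. Hence the deformation Poisson bracket of two central elements of R/pR is again central. -/
/-- In an associative ring `R` with no `p`-torsion, if `z, w` have central
images in `R/pR` and `p·u = zw − wz`, then the image of `u` in `R/pR` is central; hence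
the deformation Poisson bracket of two central elements of `R/pR` is again central. -/
theorem deformation_bracket_central (p : ℕ) (hp : p.Prime) (R : Type*) [Ring R]
    (htorsionfree : ∀ x : R, p • x = 0 → x = 0)
    (z w u : R)
    (hzc : ∀ x : R, ∃ a : R, z * x - x * z = (p : R) * a)
    (hwc : ∀ x : R, ∃ a : R, w * x - x * w = (p : R) * a)
    (hu : p • u = z * w - w * z) :
    ∀ x : R, ∃ a : R, u * x - x * u = (p : R) * a := by
  intro x
  obtain ⟨a, ha⟩ := hwc x
  obtain ⟨b, hb⟩ := hzc x
  obtain ⟨a2, ha2⟩ := hzc a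
  obtain ⟨b2, hb2⟩ := hwc b
  have ha' : p • a = w * x - x * w := by rw [nsmul_eq_mul, ← ha]
  have hb' : p • b = z * x - x * z := by rw [nsmul_eq_mul, ← hb]
  have key : p • (u * x - x * u) = p • (z * a - a * z + (b * w - w * b)) := by
    rw [smul_sub, ← smul_mul_assoc, ← mul_smul_comm, hu, smul_add, smul_sub, smul_sub,
      ← mul_smul_comm p z a, ← smul_mul_assoc p a z, ← smul_mul_assoc p b w,
      ← mul_smul_comm p w b, ha', hb']
    noncomm_ring
  have h0 : u * x - x * u - (z * a - a * z + (b * w - w * b)) = 0 :=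
    htorsionfree _ (by rw [smul_sub, key, sub_self])
  rw [sub_eq_zero] at h0
  refine ⟨a2 - b2, ?_⟩
  rw [h0, mul_sub, ← ha2, ← hb2]
  noncomm_ring
end

section
/- Let k be a field of characteristic p > 0, let R = k[X₁,…,X_m] be a polynomial ring, and let f₁,…,fₙ ∈ R be a regular sequence such that the quotient ring R/(f₁,…,fₙ) is an integral domain. Then the monomials f₁^{α₁}···fₙ^{αₙ} with 0 ≤ αᵢ < p are linearly independent over the subring of p-th powers: if elements x_α ∈ R indexed by α ∈ {0,…,p−1}ⁿ satisfy Σ_α f₁^{α₁}···fₙ^{αₙ}·x_α^p = 0, then x_α = 0 for all α. -/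
/-!
Let `I = (f₁, …, fₙ)`. A regular sequence is quasi-regular: a form `F` of degree `d` in `n`
variables with `F(f) ∈ I ^ (d + 1)` has all its coefficients in `I` (induction on `n` and `d`,
splitting off the last variable). Given a nontrivial relation, let `ν α` be the `I`-adic order of
`x α` (finite by Krull's intersection theorem) and look at the nonzero terms of least weight
`|α| + p ν α`, say `D`. Lifting each `x α` to a form `W α` of degree `ν α`, the form
`∑ X^α (W α)^p` of degree `D` over these `α` takes a value in `I ^ (D + 1)`, so its coefficients lie
in `I`. Since base-`p` expansions of exponents are unique, these coefficients are the `p`-th powers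
of the coefficients of the `W α`; as `I` is prime, `x α = W α (f) ∈ I ^ (ν α + 1)`, contradicting
the choice of `ν α`.
-/

open MvPolynomial Ideal

section

variable {R σ : Type*} [CommRing R]

namespace MvPolynomial

theorem IsHomogeneous.eval_mem_mul_pow {f : σ → R} {J : Ideal R} {d : ℕ}
    {F : MvPolynomial σ R} (hF : F.IsHomogeneous d) (hJ : F ∈ J.map C) :
    eval f F ∈ J * span (Set.range f) ^ d := by
  rw [F.as_sum, map_sum]
  refine sum_mem fun v hv => ?_
  rw [← mul_one (coeff v F), ← C_mul_monomial, map_mul, eval_C]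
  refine mul_mem_mul (mem_map_C_iff.mp hJ v) ((mem_span_pow_iff_exists_isHomogeneous f _).mpr
    ⟨_, isHomogeneous_monomial _ ?_, rfl⟩)
  by_contra h
  exact mem_support_iff.mp hv (hF.coeff_eq_zero h)

theorem IsHomogeneous.eval_mem_pow {f : σ → R} {d : ℕ} {F : MvPolynomial σ R}
    (hF : F.IsHomogeneous d) : eval f F ∈ span (Set.range f) ^ d :=
  (mem_span_pow_iff_exists_isHomogeneous f _).mpr ⟨F, hF, rfl⟩

theorem IsHomogeneous.mem_map_C_of_eval_mem {f : σ → R} {J : Ideal R} {F : MvPolynomial σ R}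
    (hF : F.IsHomogeneous 0) (h : eval f F ∈ J) : F ∈ J.map C := by
  rw [← homogeneousComponent_eq_self hF, homogeneousComponent_zero] at h ⊢
  rw [eval_C] at h
  exact mem_map_of_mem C h

theorem rename_mem_map_C {τ : Type*} (k : σ → τ) {J : Ideal R} {F : MvPolynomial σ R}
    (hF : F ∈ J.map C) : rename k F ∈ J.map C := by
  have : (rename k : MvPolynomial σ R →ₐ[R] MvPolynomial τ R).toRingHom.comp C = C :=
    RingHom.ext (rename_C k)
  rw [← this, ← Ideal.map_map]
  exact mem_map_of_mem _ hF

theorem IsHomogeneous.exists_eq_rename_castSucc_add_X_last_mul {n d : ℕ}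
    {F : MvPolynomial (Fin (n + 1)) R} (hF : F.IsHomogeneous (d + 1)) :
    ∃ (G : MvPolynomial (Fin n) R) (H : MvPolynomial (Fin (n + 1)) R),
      G.IsHomogeneous (d + 1) ∧ H.IsHomogeneous d ∧
        F = rename Fin.castSucc G + X (Fin.last n) * H := by
  set s : Fin (n + 1) →₀ ℕ := Finsupp.single (Fin.last n) 1
  have hrem : ∀ u, coeff u (F.modMonomial s) ≠ 0 → ¬ s ≤ u := fun u hu hsu =>
    hu (coeff_modMonomial_of_le F hsu)
  have hvars : ((F.modMonomial s).vars : Set (Fin (n + 1))) ⊆ Set.range Fin.castSucc := by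
    intro i hi
    obtain ⟨u, hu, hiu⟩ := (mem_vars_iff_mem_support i).mp hi
    induction i using Fin.lastCases with
    | last =>
      exact absurd (Finsupp.single_le_iff.mpr (Nat.one_le_iff_ne_zero.mpr
        (Finsupp.mem_support_iff.mp hiu))) (hrem u (mem_support_iff.mp hu))
    | cast j => exact ⟨j, rfl⟩
  obtain ⟨G, hG⟩ := exists_rename_eq_of_vars_subset_range _ _ (Fin.castSucc_injective n) hvars
  refine ⟨G, F.divMonomial s, ?_, fun u hu => ?_, ?_⟩
  · rw [← rename_isHomogeneous_iff (Fin.castSucc_injective n), hG]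
    intro u hu
    exact hF (by rwa [← coeff_modMonomial_of_not_le F (hrem u hu)])
  · rw [coeff_divMonomial] at hu
    have := hF hu
    have hs : Finsupp.weight 1 s = 1 := by simp [s, Finsupp.weight_single]
    rw [map_add, hs] at this
    omega
  · rw [hG]
    exact ((add_comm _ _).trans (divMonomial_add_modMonomial_single F _)).symm

theorem eval_rename_castSucc_add_X_last_mul {n : ℕ} (f : Fin (n + 1) → R)
    (G : MvPolynomial (Fin n) R) (H : MvPolynomial (Fin (n + 1)) R) :
    eval f (rename Fin.castSucc G + X (Fin.last n) * H) =
      eval (Fin.init f) G + f (Fin.last n) * eval f H := by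
  rw [map_add, map_mul, eval_rename, eval_X]
  rfl

end MvPolynomial

/-- `f` is quasi-regular if every form `F` of degree `d` with `F(f) ∈ I ^ (d + 1)` has all its
coefficients in `I = (f)`, i.e. if `(R ⧸ I)[X] → gr_I R`, `X i ↦ f i`, is injective. -/
def IsQuasiRegular (f : σ → R) : Prop :=
  ∀ ⦃d : ℕ⦄ ⦃F : MvPolynomial σ R⦄, F.IsHomogeneous d →
    eval f F ∈ span (Set.range f) ^ (d + 1) → F ∈ (span (Set.range f)).map C

theorem isQuasiRegular_of_isEmpty [IsEmpty σ] (f : σ → R) : IsQuasiRegular f :=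
  fun d F _ hF => (isHomogeneous_of_isEmpty _ _ F).mem_map_C_of_eval_mem
    (pow_le_self d.succ_ne_zero hF)

theorem IsQuasiRegular.mem_pow_of_mul_mem_pow {f : σ → R} (hf : IsQuasiRegular f) {g : R}
    (hg : ∀ w, g * w ∈ span (Set.range f) → w ∈ span (Set.range f)) {w : R} :
    ∀ {e : ℕ}, g * w ∈ span (Set.range f) ^ e → w ∈ span (Set.range f) ^ e
  | 0, _ => by simp
  | e + 1, h => by
    obtain ⟨W, hW, rfl⟩ := (mem_span_pow_iff_exists_isHomogeneous f w).mp
      (hf.mem_pow_of_mul_mem_pow hg (pow_le_pow_right e.le_succ h))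
    have hgW : C g * W ∈ (span (Set.range f)).map C :=
      hf (hW.C_mul g) (by rwa [map_mul, eval_C])
    have hWI : W ∈ (span (Set.range f)).map C := mem_map_C_iff.mpr fun v =>
      hg _ (by simpa only [coeff_C_mul] using mem_map_C_iff.mp hgW v)
    simpa only [pow_succ', smul_eq_mul] using hW.eval_mem_mul_pow hWI

theorem IsQuasiRegular.of_init {n : ℕ} {f : Fin (n + 1) → R} (hf : IsQuasiRegular (Fin.init f))
    (hg : ∀ w, f (Fin.last n) * w ∈ span (Set.range (Fin.init f)) →
      w ∈ span (Set.range (Fin.init f))) :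
    IsQuasiRegular f := by
  set I' := span (Set.range (Fin.init f))
  set I := span (Set.range f)
  set g := f (Fin.last n)
  have hI'I : I' ≤ I := span_mono (Set.range_comp_subset_range Fin.castSucc f)
  have hgI : g ∈ I := subset_span ⟨_, rfl⟩
  intro d
  induction d with
  | zero => exact fun F hF h => hF.mem_map_C_of_eval_mem (by simpa using h)
  | succ d ih =>
    -- Split both `F` and a form `P` of degree `d + 2` with `P(f) = F(f)` along the last variable;
    -- as `g` is regular modulo `I'`, this gives `H(f) ∈ I ^ (d + 1)` (so `ih` applies to `H`) and a
    -- form `W` with `(G - g W)(f) ∈ I' ^ (d + 2)` (so `hf` applies to `G - g W`).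
    intro F hF h
    obtain ⟨G, H, hG, hH, rfl⟩ := hF.exists_eq_rename_castSucc_add_X_last_mul
    obtain ⟨P, hP, hPF⟩ := (mem_span_pow_iff_exists_isHomogeneous f _).mp h
    obtain ⟨P₁, P₂, hP₁, hP₂, rfl⟩ := hP.exists_eq_rename_castSucc_add_X_last_mul
    rw [eval_rename_castSucc_add_X_last_mul, eval_rename_castSucc_add_X_last_mul] at hPF
    have hdiff : eval f P₂ - eval f H ∈ I' ^ (d + 1) := by
      refine hf.mem_pow_of_mul_mem_pow hg ?_
      rw [show g * (eval f P₂ - eval f H) = eval (Fin.init f) G - eval (Fin.init f) P₁ by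
        linear_combination hPF]
      exact sub_mem hG.eval_mem_pow (pow_le_pow_right (by omega) hP₁.eval_mem_pow)
    have hHI : H ∈ I.map C := by
      refine ih hH ?_
      rw [show eval f H = eval f P₂ - (eval f P₂ - eval f H) by ring]
      exact sub_mem hP₂.eval_mem_pow (pow_right_mono hI'I _ hdiff)
    obtain ⟨W, hW, hWeval⟩ := (mem_span_pow_iff_exists_isHomogeneous _ _).mp hdiff
    have hGW : G - C g * W ∈ I'.map C := by
      refine hf (hG.sub (hW.C_mul g)) ?_
      rw [map_sub, map_mul, eval_C, hWeval,
        show eval (Fin.init f) G - g * (eval f P₂ - eval f H) = eval (Fin.init f) P₁ by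
          linear_combination -hPF]
      exact hP₁.eval_mem_pow
    have hGI : G ∈ I.map C := by
      rw [← sub_add_cancel G (C g * W)]
      exact add_mem (map_mono hI'I hGW) (mul_mem_right _ _ (mem_map_of_mem C hgI))
    exact add_mem (rename_mem_map_C _ hGI) (mul_mem_left _ _ hHI)

open RingTheory.Sequence in
theorem isQuasiRegular_of_isWeaklyRegular :
    ∀ {n : ℕ} {f : Fin n → R}, IsWeaklyRegular R (List.ofFn f) → IsQuasiRegular f
  | 0, f, _ => isQuasiRegular_of_isEmpty f
  | n + 1, f, hf => by
    rw [List.ofFn_succ', List.concat_eq_append, isWeaklyRegular_append_iff,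
      isWeaklyRegular_singleton_iff, isSMulRegular_quotient_iff_mem_of_smul_mem] at hf
    have hI : (ofList (List.ofFn fun i => f i.castSucc) • ⊤ : Submodule R R) =
        span (Set.range (Fin.init f)) := by
      simp only [ofList, List.mem_ofFn, smul_eq_mul, mul_top]
      rfl
    rw [hI] at hf
    exact .of_init (isQuasiRegular_of_isWeaklyRegular hf.1) (by simpa using hf.2)

section Digits

variable [Fintype σ] {p : ℕ}

noncomputable def digitsExponent (α : σ → Fin p) : σ →₀ ℕ :=
  Finsupp.equivFunOnFinite.symm fun i => α i

@[simp]
theorem digitsExponent_apply (α : σ → Fin p) (i : σ) : digitsExponent α i = α i := by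
  simp [digitsExponent]

theorem digitsExponent_add_smul_inj {α β : σ → Fin p} {v w : σ →₀ ℕ} :
    digitsExponent α + p • v = digitsExponent β + p • w ↔ α = β ∧ v = w := by
  refine ⟨fun h => ?_, fun h => by rw [h.1, h.2]⟩
  have hcoord (i : σ) : (α i : ℕ) + p * v i = β i + p * w i := by
    simpa using DFunLike.congr_fun h i
  refine ⟨funext fun i => Fin.ext ?_, Finsupp.ext fun i => ?_⟩
  · simpa [Nat.add_mul_mod_self_left, Nat.mod_eq_of_lt] using congrArg (· % p) (hcoord i)
  · simpa [Nat.add_mul_div_left, Nat.div_eq_of_lt, (α i).pos] using congrArg (· / p) (hcoord i)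

theorem coeff_digitsExponent_add_smul_monomial_mul_expand (α β : σ → Fin p) (v : σ →₀ ℕ)
    (W : MvPolynomial σ R) :
    coeff (digitsExponent α + p • v) (monomial (digitsExponent β) 1 * expand p W) =
      if β = α then coeff v W else 0 := by
  classical
  induction W using induction_on' with
  | monomial u c =>
    simp only [expand_monomial, monomial_mul, one_mul, coeff_monomial, digitsExponent_add_smul_inj,
      ite_and]
  | add W₁ W₂ h₁ h₂ =>
    rw [map_add, mul_add, coeff_add, h₁, h₂, coeff_add]
    split_ifs <;> simp

@[simp]
theorem eval_monomial_digitsExponent (f : σ → R) (α : σ → Fin p) :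
    eval f (monomial (digitsExponent α) 1) = ∏ i, f i ^ (α i : ℕ) := by
  simp [eval_monomial, Finsupp.prod_fintype]

theorem isHomogeneous_monomial_digitsExponent (α : σ → Fin p) :
    (monomial (digitsExponent α) (1 : R)).IsHomogeneous (∑ i, (α i : ℕ)) :=
  isHomogeneous_monomial _ (by simp [Finsupp.degree_eq_sum])

theorem coeff_sum_monomial_digitsExponent_mul_pow [ExpChar R p] {T : Finset (σ → Fin p)}
    (W : (σ → Fin p) → MvPolynomial σ R) {α : σ → Fin p} (hα : α ∈ T) (v : σ →₀ ℕ) :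
    coeff (digitsExponent α + p • v) (∑ β ∈ T, monomial (digitsExponent β) 1 * W β ^ p) =
      coeff v (W α) ^ p := by
  have hfrob (β : σ → Fin p) : monomial (digitsExponent β) 1 * W β ^ p =
      MvPolynomial.map (frobenius R p) (monomial (digitsExponent β) 1 * expand p (W β)) := by
    rw [map_mul, map_monomial, (frobenius R p).map_one, map_frobenius_expand]
  simp only [hfrob, ← map_sum, coeff_map, coeff_sum,
    coeff_digitsExponent_add_smul_monomial_mul_expand, Finset.sum_ite_eq', if_pos hα,
    frobenius_def]

end Digits

theorem prod_pow_mul_pow_mem_pow {p : ℕ} [Fintype σ] {f : σ → R} {α : σ → Fin p} {x : R} {ν : ℕ}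
    (hx : x ∈ span (Set.range f) ^ ν) :
    (∏ i, f i ^ (α i : ℕ)) * x ^ p ∈ span (Set.range f) ^ (∑ i, (α i : ℕ) + p * ν) := by
  rw [pow_add, pow_mul', ← eval_monomial_digitsExponent]
  exact mul_mem_mul (isHomogeneous_monomial_digitsExponent α).eval_mem_pow (pow_mem_pow hx p)

theorem IsQuasiRegular.mem_pow_succ_of_sum_eq_zero {p : ℕ} [ExpChar R p] [Fintype σ]
    [DecidableEq σ] {f : σ → R}
    (hf : IsQuasiRegular f) (hI : (span (Set.range f)).IsPrime) {x : (σ → Fin p) → R}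
    {ν : (σ → Fin p) → ℕ} (hx : ∀ α, x α ∈ span (Set.range f) ^ ν α) {D : ℕ}
    (hlow : ∀ α, ∑ i, (α i : ℕ) + p * ν α < D → x α = 0)
    (hsum : ∑ α, (∏ i, f i ^ (α i : ℕ)) * x α ^ p = 0) {α : σ → Fin p}
    (hα : ∑ i, (α i : ℕ) + p * ν α = D) : x α ∈ span (Set.range f) ^ (ν α + 1) := by
  set I := span (Set.range f)
  choose W hW hWx using fun β => (mem_span_pow_iff_exists_isHomogeneous f (x β)).mp (hx β)
  set T := Finset.univ.filter fun β : σ → Fin p => ∑ i, (β i : ℕ) + p * ν β = D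
  have hhigh : ∑ β ∈ Tᶜ, (∏ i, f i ^ (β i : ℕ)) * x β ^ p ∈ I ^ (D + 1) := by
    refine sum_mem fun β hβ => ?_
    simp only [T, Finset.mem_compl, Finset.mem_filter, Finset.mem_univ, true_and] at hβ
    rcases lt_or_gt_of_ne hβ with hlt | hgt
    · rw [hlow β hlt, zero_pow (expChar_ne_zero R p), mul_zero]
      exact zero_mem _
    · exact pow_le_pow_right hgt (prod_pow_mul_pow_mem_pow (hx β))
  have hF : ∑ β ∈ T, monomial (digitsExponent β) 1 * W β ^ p ∈ I.map C := by
    refine hf (d := D) (IsHomogeneous.sum _ _ _ fun β hβ => ?_) ?_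
    · rw [← (Finset.mem_filter.mp hβ).2, mul_comm p]
      exact (isHomogeneous_monomial_digitsExponent β).mul ((hW β).pow p)
    · rw [← Finset.sum_add_sum_compl T] at hsum
      simp only [map_sum, map_mul, map_pow, eval_monomial_digitsExponent, hWx,
        eq_neg_of_add_eq_zero_left hsum]
      exact neg_mem hhigh
  have hWα : W α ∈ I.map C := mem_map_C_iff.mpr fun v => hI.mem_of_pow_mem p <| by
    rw [← coeff_sum_monomial_digitsExponent_mul_pow (T := T) W (by simpa [T] using hα)]
    exact mem_map_C_iff.mp hF _
  simpa [hWx, pow_succ'] using (hW α).eval_mem_mul_pow (f := f) hWα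

theorem Ideal.exists_mem_pow_notMem_pow_succ_of_ne_zero [IsNoetherianRing R] [IsDomain R]
    {I : Ideal R} (hI : I ≠ ⊤) {y : R} (hy : y ≠ 0) : ∃ d, y ∈ I ^ d ∧ y ∉ I ^ (d + 1) := by
  by_contra! h
  have hmem (d : ℕ) : y ∈ I ^ d := by
    induction d with
    | zero => simp
    | succ d ih => exact h d ih
  have : y ∈ ⨅ d, I ^ d := mem_iInf.mpr hmem
  rw [iInf_pow_eq_bot_of_isDomain I hI] at this
  exact hy this

open RingTheory.Sequence in
theorem eq_zero_of_sum_prod_pow_mul_pow_eq_zero [IsNoetherianRing R] [IsDomain R] {p : ℕ}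
    [ExpChar R p] {n : ℕ} {f : Fin n → R} (hf : IsWeaklyRegular R (List.ofFn f))
    (hI : (span (Set.range f)).IsPrime) {x : (Fin n → Fin p) → R}
    (hsum : ∑ α, (∏ i, f i ^ (α i : ℕ)) * x α ^ p = 0) (α : Fin n → Fin p) : x α = 0 := by
  classical
  set I := span (Set.range f)
  have hν (β : Fin n → Fin p) : ∃ d, x β ∈ I ^ d ∧ (x β ≠ 0 → x β ∉ I ^ (d + 1)) := by
    by_cases hβ : x β = 0
    · exact ⟨0, by simp [hβ]⟩
    · obtain ⟨d, hd, hd'⟩ := exists_mem_pow_notMem_pow_succ_of_ne_zero hI.ne_top hβ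
      exact ⟨d, hd, fun _ => hd'⟩
  choose ν hνmem hνnot using hν
  by_contra hα
  obtain ⟨α₀, hα₀, hmin⟩ := (Finset.univ.filter fun β => x β ≠ 0).exists_min_image
    (fun β => ∑ i, (β i : ℕ) + p * ν β) ⟨α, by simpa using hα⟩
  simp only [Finset.mem_filter, Finset.mem_univ, true_and] at hα₀ hmin
  refine hνnot α₀ hα₀ ((isQuasiRegular_of_isWeaklyRegular hf).mem_pow_succ_of_sum_eq_zero hI hνmem
    (fun β hβ => ?_) hsum rfl)
  by_contra hxβ
  exact (hmin β hxβ).not_gt hβ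

end

/-- Over a polynomial ring `R = k[X₁,…,X_m]` in characteristic `p > 0`,
if `f₁,…,fₙ` is a regular sequence with `R/(f₁,…,fₙ)` a domain, then the monomials
`f₁^{α₁}⋯fₙ^{αₙ}` with `0 ≤ αᵢ < p` are linearly independent over the subring of
`p`-th powers. -/
theorem monomials_linearly_independent_over_pth_powers
    (p : ℕ) (hp : p.Prime) (k : Type*) [Field k] [CharP k p]
    (m n : ℕ) (f : Fin n → MvPolynomial (Fin m) k)
    (hreg : RingTheory.Sequence.IsRegular (MvPolynomial (Fin m) k) (List.ofFn f))
    (hdom : IsDomain (MvPolynomial (Fin m) k ⧸ Ideal.span (Set.range f)))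
    (x : (Fin n → Fin p) → MvPolynomial (Fin m) k)
    (hsum : ∑ α : Fin n → Fin p, (∏ i : Fin n, f i ^ (α i : ℕ)) * (x α) ^ p = 0) :
    ∀ α : Fin n → Fin p, x α = 0 := by
  have := ExpChar.prime (R := MvPolynomial (Fin m) k) hp
  exact eq_zero_of_sum_prod_pow_mul_pow_eq_zero hreg.toIsWeaklyRegular
    ((Ideal.Quotient.isDomain_iff_prime _).mp hdom) hsum
end

section
/- Let k be a field of characteristic p > 0 and let 𝔤 be a finite-dimensional nilpotent Lie algebra over k. Let J be the two-sided ideal of the universal enveloping algebra U(𝔤) generated by the elements ι(x)ᵖ for all x ∈ 𝔤, and let K = ker ε be the augmentation ideal. Then K is nilpotent modulo J: there exists a positive integer N such that K^N ⊆ J. -/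
/-!
Choose a finite spanning family `g e` of `𝔤` with `g e` in the `(w e - 1)`-st term of the lower
central series. Since `⁅C^i 𝔤, C^j 𝔤⁆ ⊆ C^(i+j+1) 𝔤`, the commutator of two letters `ι (g e)` is a
combination of letters of weight at least the sum of their weights, and `K^N` lies in the span of
the words of weight at least `N`. A word of weight `N > ∑ₑ (p - 1) w e` contains some letter at
least `p` times; moving `p` copies of it to the front changes the word only by shorter words of no
smaller weight, so by induction on the length every such word lies in `J`.
-/

open Submodule

section LowerCentralSeries

open LieModule

variable {R L : Type*} [CommRing R] [LieRing L] [LieAlgebra R L]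

theorem LieModule.lie_mem_lowerCentralSeries_add_add_one {i j : ℕ} {x y : L}
    (hx : x ∈ lowerCentralSeries R L L i) (hy : y ∈ lowerCentralSeries R L L j) :
    ⁅x, y⁆ ∈ lowerCentralSeries R L L (i + j + 1) := by
  have top_lie_mem {n : ℕ} (z : L) {v : L} (hv : v ∈ lowerCentralSeries R L L n) :
      ⁅z, v⁆ ∈ lowerCentralSeries R L L (n + 1) := by
    rw [lowerCentralSeries_succ]
    exact LieSubmodule.lie_mem_lie (LieSubmodule.mem_top z) hv
  induction i generalizing j x y with
  | zero => simpa only [zero_add] using top_lie_mem x hy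
  | succ i ih =>
    rw [lowerCentralSeries_succ, ← LieSubmodule.mem_toSubmodule,
      LieSubmodule.lieIdeal_oper_eq_linear_span'] at hx
    induction hx using Submodule.span_induction with
    | mem _ hz =>
      obtain ⟨z, -, v, hv, rfl⟩ := hz
      rw [lie_lie]
      refine sub_mem ?_ ?_
      · simpa only [add_right_comm i 1 j] using top_lie_mem z (ih hv hy)
      · simpa only [add_assoc, add_comm 1 j] using ih hv (top_lie_mem z hy)
    | zero => simp
    | add _ _ _ _ h₁ h₂ => rw [add_lie]; exact add_mem h₁ h₂
    | smul c _ _ h => rw [smul_lie]; exact Submodule.smul_mem _ c h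

theorem LieAlgebra.exists_weighted_spanning_family (R L : Type*) [CommRing R] [LieRing L]
    [LieAlgebra R L] [IsNoetherian R L] [LieRing.IsNilpotent L] :
    ∃ (ι : Type) (_ : Fintype ι) (g : ι → L) (w : ι → ℕ),
      span R (Set.range g) = ⊤ ∧ (∀ e, 1 ≤ w e) ∧
      ∀ a b, ⁅g a, g b⁆ ∈ span R (g '' {e | w a + w b ≤ w e}) := by
  obtain ⟨c, hc⟩ := LieModule.IsNilpotent.nilpotent R L L
  choose n s hs using fun i : Fin c ↦ fg_iff_exists_fin_generating_family.1
    (IsNoetherian.noetherian (lowerCentralSeries R L L i).toSubmodule)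
  let g : (Σ i : Fin c, Fin (n i)) → L := fun e ↦ s e.1 e.2
  let w : (Σ i : Fin c, Fin (n i)) → ℕ := fun e ↦ e.1 + 1
  have hlcs (m : ℕ) : (lowerCentralSeries R L L m).toSubmodule ≤
      span R (g '' {e | m + 1 ≤ w e}) := by
    by_cases hm : m < c
    · rw [← hs ⟨m, hm⟩]
      refine span_le.2 ?_
      rintro _ ⟨j, rfl⟩
      exact subset_span ⟨⟨⟨m, hm⟩, j⟩, le_refl (m + 1), rfl⟩
    · have := LieModule.antitone_lowerCentralSeries R L L (not_lt.1 hm)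
      rw [hc, le_bot_iff] at this
      simp [this]
  refine ⟨Σ i : Fin c, Fin (n i), inferInstance, g, w, ?_, fun e ↦ Nat.le_add_left 1 e.1, ?_⟩
  · refine top_le_iff.1 (le_trans ?_ ((hlcs 0).trans (span_mono (Set.image_subset_range _ _))))
    simp
  · have hg (e) : g e ∈ lowerCentralSeries R L L e.1 := by
      rw [← LieSubmodule.mem_toSubmodule, ← hs e.1]
      exact subset_span ⟨e.2, rfl⟩
    intro a b
    have := hlcs _ (lie_mem_lowerCentralSeries_add_add_one (hg a) (hg b))
    rwa [show (a.1 : ℕ) + b.1 + 1 + 1 = w a + w b by simp only [w]; ring] at this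

end LowerCentralSeries

theorem UniversalEnvelopingAlgebra.adjoin_range_ι (R L : Type*) [CommRing R] [LieRing L]
    [LieAlgebra R L] :
    Algebra.adjoin R (Set.range (ι R : L → UniversalEnvelopingAlgebra R L)) = ⊤ := by
  have hι : Set.range (ι R : L → UniversalEnvelopingAlgebra R L) =
      mkAlgHom R L '' Set.range (TensorAlgebra.ι R) := by
    rw [← Set.range_comp]; rfl
  rw [hι, ← AlgHom.map_adjoin, TensorAlgebra.adjoin_range_ι, Algebra.map_top,
    AlgHom.range_eq_top]
  exact RingCon.mkₐ_surjective _

section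

attribute [local instance] LieRing.ofAssociativeRing

variable (R : Type*) {L : Type*} [CommRing R] [LieRing L] [LieAlgebra R L]

theorem UniversalEnvelopingAlgebra.ι_lie (y z : L) :
    ι R ⁅y, z⁆ = ι R y * ι R z - ι R z * ι R y :=
  LieHom.map_lie _ _ _

theorem UniversalEnvelopingAlgebra.ι_mem_span_image {s : Set L} {y : L} (h : y ∈ span R s) :
    ι R y ∈ span R (ι R '' s) :=
  apply_mem_span_image_of_mem_span (ι R).toLinearMap h

end

theorem AlgHom.ker_le_of_adjoin_eq_top {R A : Type*} [CommRing R] [Ring A] [Algebra R A]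
    (ε : A →ₐ[R] R) {s : Set A} (hs : Algebra.adjoin R s = ⊤) {P : Submodule R A}
    (hP : P * P ≤ P) (hsP : s ⊆ P) (hsε : ∀ a ∈ s, ε a = 0) :
    LinearMap.ker ε.toLinearMap ≤ P := by
  suffices h : ∀ a : A, a - algebraMap R A (ε a) ∈ P by
    intro a ha
    simpa [show ε a = 0 from ha] using h a
  intro a
  induction (hs ▸ Algebra.mem_top : a ∈ Algebra.adjoin R s) using Algebra.adjoin_induction with
  | mem a ha => simpa [hsε a ha] using hsP ha
  | algebraMap r => simp
  | add a b _ _ ha hb =>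
    convert add_mem ha hb using 1
    rw [map_add, map_add]; abel
  | mul a b _ _ ha hb =>
    -- `ab - ε(ab) = (a - ε a)(b - ε b) + ε a • (b - ε b) + ε b • (a - ε a)`
    convert add_mem (add_mem (hP (mul_mem_mul ha hb)) (P.smul_mem (ε a) hb)) (P.smul_mem (ε b) ha)
      using 1
    simp only [map_mul, Algebra.smul_def, mul_sub, sub_mul, Algebra.commutes (ε b)]
    abel

theorem List.exists_le_count_of_sum_lt_sum_map {ι : Type*} [Fintype ι] [DecidableEq ι]
    (w : ι → ℕ) (p : ℕ) {l : List ι} (hl : ∑ e, (p - 1) * w e < (l.map w).sum) :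
    ∃ e, p ≤ l.count e := by
  by_contra! h
  refine hl.not_ge ?_
  rw [Finset.sum_list_map_count]
  calc ∑ e ∈ l.toFinset, l.count e • w e ≤ ∑ e ∈ l.toFinset, (p - 1) * w e :=
        Finset.sum_le_sum fun e _ ↦ Nat.mul_le_mul_right _ (Nat.le_sub_one_of_lt (h e))
    _ ≤ ∑ e, (p - 1) * w e := Finset.sum_le_sum_of_subset (Finset.subset_univ _)

section Words

variable (k : Type*) {A ι : Type*} [CommRing k] [Ring A] [Algebra k A] (x : ι → A)

def wordSpan (s : Set (List ι)) : Submodule k A :=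
  span k ((fun l ↦ (l.map x).prod) '' s)

variable {k x}

theorem prod_mem_wordSpan {s : Set (List ι)} {l : List ι} (hl : l ∈ s) :
    (l.map x).prod ∈ wordSpan k x s :=
  subset_span ⟨l, hl, rfl⟩

theorem wordSpan_le_iff {s : Set (List ι)} {N : Submodule k A} :
    wordSpan k x s ≤ N ↔ ∀ l ∈ s, (l.map x).prod ∈ N := by
  simp [wordSpan, span_le, Set.subset_def]

theorem wordSpan_mono {s t : Set (List ι)} (h : s ⊆ t) : wordSpan k x s ≤ wordSpan k x t :=
  span_mono (Set.image_mono h)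

theorem wordSpan_mul_wordSpan (s t : Set (List ι)) :
    wordSpan k x s * wordSpan k x t = wordSpan k x (Set.image2 (· ++ ·) s t) := by
  simp only [wordSpan, span_mul_span, Set.image2_image_left, Set.image2_image_right,
    Set.image_image2, ← Set.image2_mul]
  congr! 2
  simp

theorem mul_mem_wordSpan_image_cons (a : ι) {s : Set (List ι)} {u : A}
    (hu : u ∈ wordSpan k x s) : x a * u ∈ wordSpan k x (List.cons a '' s) := by
  refine (wordSpan_le_iff.2 fun l hl ↦ ?_ : wordSpan k x s ≤
    (wordSpan k x (List.cons a '' s)).comap (LinearMap.mulLeft k (x a))) hu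
  simpa using prod_mem_wordSpan (x := x) (Set.mem_image_of_mem (List.cons a) hl)

theorem mul_prod_mem_wordSpan {t : Set ι} {u : A} (hu : u ∈ span k (x '' t)) (l : List ι) :
    u * (l.map x).prod ∈ wordSpan k x ((· :: l) '' t) := by
  refine (span_le.2 ?_ : span k (x '' t) ≤
    (wordSpan k x ((· :: l) '' t)).comap (LinearMap.mulRight k (l.map x).prod)) hu
  rintro _ ⟨e, he, rfl⟩
  simpa using prod_mem_wordSpan (x := x) (Set.mem_image_of_mem (· :: l) he)

variable (w : ι → ℕ)

theorem wordSpan_weight_mul_le (a b : ℕ) :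
    wordSpan k x {l | a ≤ (l.map w).sum} * wordSpan k x {l | b ≤ (l.map w).sum} ≤
      wordSpan k x {l | a + b ≤ (l.map w).sum} := by
  rw [wordSpan_mul_wordSpan]
  refine wordSpan_mono ?_
  rintro _ ⟨l₁, h₁, l₂, h₂, rfl⟩
  simp only [Set.mem_ofPred_eq, List.map_append, List.sum_append] at *
  omega

theorem pow_le_wordSpan {K : Submodule k A} (hK : K ≤ wordSpan k x {l | 1 ≤ (l.map w).sum}) :
    ∀ n : ℕ, K ^ n ≤ wordSpan k x {l | n ≤ (l.map w).sum}
  | 0 => by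
    rw [pow_zero, Submodule.one_le]
    simpa using prod_mem_wordSpan (x := x) (s := {l | 0 ≤ (l.map w).sum}) (l := []) (Nat.zero_le _)
  | n + 1 => by
    rw [pow_succ]
    exact (mul_le_mul' (pow_le_wordSpan hK n) hK).trans (wordSpan_weight_mul_le w n 1)

theorem prod_sub_prod_mem_wordSpan_of_perm
    (hcomm : ∀ a b, x a * x b - x b * x a ∈ span k (x '' {e | w a + w b ≤ w e}))
    {l l' : List ι} (h : l.Perm l') :
    (l.map x).prod - (l'.map x).prod ∈
      wordSpan k x {v | v.length < l.length ∧ (l.map w).sum ≤ (v.map w).sum} := by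
  induction h with
  | nil => simp
  | cons a _ ih =>
    have := mul_mem_wordSpan_image_cons a ih
    rw [mul_sub] at this
    refine wordSpan_mono ?_ (by simpa using this)
    rintro _ ⟨v, hv, rfl⟩
    simp only [Set.mem_ofPred_eq, List.length_cons, List.map_cons, List.sum_cons] at hv ⊢
    omega
  | swap a b l =>
    have := mul_prod_mem_wordSpan (hcomm b a) l
    refine wordSpan_mono ?_ (by simpa [mul_assoc, sub_mul] using this)
    rintro _ ⟨e, he, rfl⟩
    simp only [Set.mem_ofPred_eq, List.length_cons, List.map_cons, List.sum_cons] at he ⊢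
    omega
  | trans h₁₂ _ ih₁₂ ih₂₃ =>
    rw [← h₁₂.length_eq, ← (h₁₂.map w).sum_eq] at ih₂₃
    simpa using add_mem ih₁₂ ih₂₃

theorem prod_map_mem_of_sum_lt_sum_map [Fintype ι] [DecidableEq ι]
    (hcomm : ∀ a b, x a * x b - x b * x a ∈ span k (x '' {e | w a + w b ≤ w e}))
    {p : ℕ} {J : TwoSidedIdeal A} (hJ : ∀ e, x e ^ p ∈ J) (l : List ι)
    (hl : ∑ e, (p - 1) * w e < (l.map w).sum) : (l.map x).prod ∈ J := by
  induction hn : l.length using Nat.strong_induction_on generalizing l with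
  | _ n ih =>
  obtain ⟨e, he⟩ := List.exists_le_count_of_sum_lt_sum_map w p hl
  obtain ⟨r, hr⟩ := (List.replicate_sublist_iff.2 he).exists_perm_append
  have hshorter : wordSpan k x {v | v.length < l.length ∧ (l.map w).sum ≤ (v.map w).sum} ≤
      J.asIdeal.restrictScalars k :=
    wordSpan_le_iff.2 fun v hv ↦ ih _ (hn ▸ hv.1) v (hl.trans_le hv.2) rfl
  rw [← sub_add_cancel (l.map x).prod ((List.replicate p e ++ r).map x).prod]
  refine J.add_mem (hshorter (prod_sub_prod_mem_wordSpan_of_perm w hcomm hr)) ?_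
  simpa using J.mul_mem_right _ _ (hJ e)

end Words

theorem UniversalEnvelopingAlgebra.ker_le_wordSpan {R L σ : Type*} [CommRing R] [LieRing L]
    [LieAlgebra R L] {g : σ → L} (hg : span R (Set.range g) = ⊤) {w : σ → ℕ}
    (hw : ∀ e, 1 ≤ w e) (ε : UniversalEnvelopingAlgebra R L →ₐ[R] R) (hε : ∀ y, ε (ι R y) = 0) :
    LinearMap.ker ε.toLinearMap ≤
      wordSpan R (fun e ↦ ι R (g e)) {l | 1 ≤ (l.map w).sum} := by
  refine ε.ker_le_of_adjoin_eq_top (adjoin_range_ι R L)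
    ((wordSpan_weight_mul_le w 1 1).trans (wordSpan_mono fun _ ↦ le_trans (Nat.le_add_left 1 1)))
    ?_ (by rintro _ ⟨y, rfl⟩; exact hε y)
  rintro _ ⟨y, rfl⟩
  have := ι_mem_span_image R (hg ▸ mem_top : y ∈ span R (Set.range g))
  rw [← Set.range_comp] at this
  refine span_le.2 ?_ this
  rintro _ ⟨e, rfl⟩
  simpa using prod_mem_wordSpan (x := fun e ↦ ι R (g e)) (s := {l | 1 ≤ (l.map w).sum})
    (l := [e]) (by simpa using hw e)

theorem augmentation_ideal_nilpotent_mod_pth_powers_general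
    (p : ℕ) (k : Type*) [Field k]
    (L : Type*) [LieRing L] [LieAlgebra k L] [Module.Finite k L]
    [LieRing.IsNilpotent L]
    (ε : UniversalEnvelopingAlgebra k L →ₐ[k] k)
    (hε : ∀ x : L, ε (UniversalEnvelopingAlgebra.ι k x) = 0) :
    ∃ N : ℕ, 0 < N ∧
      ∀ u ∈ (LinearMap.ker ε.toLinearMap : Submodule k (UniversalEnvelopingAlgebra k L)) ^ N,
        u ∈ TwoSidedIdeal.span {u : UniversalEnvelopingAlgebra k L |
          ∃ x : L, u = (UniversalEnvelopingAlgebra.ι k x) ^ p} := by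
  classical
  obtain ⟨σ, _, g, w, hspan, hw, hbracket⟩ := LieAlgebra.exists_weighted_spanning_family k L
  let x := fun e ↦ UniversalEnvelopingAlgebra.ι k (g e)
  have hcomm (a b : σ) : x a * x b - x b * x a ∈ span k (x '' {e | w a + w b ≤ w e}) := by
    have := UniversalEnvelopingAlgebra.ι_mem_span_image k (hbracket a b)
    rwa [UniversalEnvelopingAlgebra.ι_lie, Set.image_image] at this
  refine ⟨∑ e, (p - 1) * w e + 1, Nat.succ_pos _, fun u hu ↦ ?_⟩
  have hu' := pow_le_wordSpan w (UniversalEnvelopingAlgebra.ker_le_wordSpan hspan hw ε hε) _ hu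
  refine (wordSpan_le_iff.2 fun l hl ↦ ?_ :
    _ ≤ (TwoSidedIdeal.span _).asIdeal.restrictScalars k) hu'
  exact prod_map_mem_of_sum_lt_sum_map w hcomm
    (fun e ↦ TwoSidedIdeal.subset_span (by exact ⟨g e, rfl⟩)) l hl

/-- For a finite-dimensional nilpotent Lie algebra `𝔤` over a field of
characteristic `p > 0`, the augmentation ideal `K = ker ε` of `U(𝔤)` is nilpotent
modulo the two-sided ideal `J` generated by the elements `ι(x)ᵖ`, `x ∈ 𝔤`:
there is `N > 0` with `K^N ⊆ J`. -/
theorem augmentation_ideal_nilpotent_mod_pth_powers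
    (p : ℕ) (hp : p.Prime) (k : Type*) [Field k] [CharP k p]
    (L : Type*) [LieRing L] [LieAlgebra k L] [Module.Finite k L]
    [LieRing.IsNilpotent L]
    (ε : UniversalEnvelopingAlgebra k L →ₐ[k] k)
    (hε : ∀ x : L, ε (UniversalEnvelopingAlgebra.ι k x) = 0) :
    ∃ N : ℕ, 0 < N ∧
      ∀ u ∈ (LinearMap.ker ε.toLinearMap : Submodule k (UniversalEnvelopingAlgebra k L)) ^ N,
        u ∈ TwoSidedIdeal.span {u : UniversalEnvelopingAlgebra k L |
          ∃ x : L, u = (UniversalEnvelopingAlgebra.ι k x) ^ p} :=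
  augmentation_ideal_nilpotent_mod_pth_powers_general p k L ε hε
end

section
/- Let K be an algebraically closed field, V a K-vector space, and f : V → V a semisimple linear endomorphism. Suppose (Vₙ)_{n≥0} is a descending chain of subspaces of V with V₀ = V, (f − id)(Vₙ) ⊆ V_{n+1} for all n, and ⋂ₙ Vₙ = 0. Then f = id. -/
/-! The range `R` of the semisimple map `f - 1` satisfies `(f - 1) R = R`, so by induction
`R ≤ Vₙ` for every `n`; hence `R ≤ ⋂ₙ Vₙ = 0`. -/

namespace Module.End

variable {R M : Type*} [CommRing R] [AddCommGroup M] [Module R M]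

/-- An invariant complement `p` of `range f` satisfies `f p ≤ p ⊓ range f = ⊥`, so
`range f = f (range f ⊔ p) = f (range f)`. -/
lemma IsSemisimple.map_range_self {f : End R M} (hf : f.IsSemisimple) :
    (LinearMap.range f).map f = LinearMap.range f := by
  have hinv : LinearMap.range f ∈ f.invtSubmodule := fun x _ => LinearMap.mem_range_self f x
  obtain ⟨p, hp, hcompl⟩ := isSemisimple_iff.mp hf _ hinv
  have hp_ker : p.map f = ⊥ :=
    disjoint_self.mp <|
      hcompl.symm.disjoint.mono (Submodule.map_le_iff_le_comap.mpr hp) LinearMap.map_le_range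
  calc (LinearMap.range f).map f
      = (LinearMap.range f ⊔ p).map f := by rw [Submodule.map_sup, hp_ker, sup_bot_eq]
    _ = LinearMap.range f := by rw [hcompl.sup_eq_top, Submodule.map_top]

lemma le_of_map_eq_self_of_map_le_succ {f : End R M} {W : Submodule R M} (hW : W.map f = W)
    {V : ℕ → Submodule R M} (h0 : V 0 = ⊤) (hstep : ∀ n, (V n).map f ≤ V (n + 1)) :
    ∀ n, W ≤ V n
  | 0 => h0 ▸ le_top
  | n + 1 => hW ▸ (Submodule.map_mono (le_of_map_eq_self_of_map_le_succ hW h0 hstep n)).trans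
      (hstep n)

end Module.End

theorem semisimple_unipotent_eq_id_general
    (K : Type*) (V : Type*) [Field K] [AddCommGroup V] [Module K V]
    (f : Module.End K V) (hf : f.IsSemisimple)
    (Vn : ℕ → Submodule K V)
    (h0 : Vn 0 = ⊤)
    (hstep : ∀ m, ∀ x ∈ Vn m, f x - x ∈ Vn (m + 1))
    (hint : (⨅ m, Vn m) = ⊥) :
    f = LinearMap.id := by
  have hg : (f - 1).IsSemisimple := by
    simpa using Module.End.isSemisimple_sub_algebraMap_iff (μ := (1 : K)).mpr hf
  have hmap : ∀ m, (Vn m).map (f - 1) ≤ Vn (m + 1) := by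
    rintro m _ ⟨x, hx, rfl⟩
    exact hstep m x hx
  have hrange : LinearMap.range (f - 1) = ⊥ := eq_bot_iff.mpr <| hint ▸ le_iInf
    (Module.End.le_of_map_eq_self_of_map_le_succ hg.map_range_self h0 hmap)
  exact sub_eq_zero.mp (LinearMap.range_eq_bot.mp hrange)

/-- A semisimple endomorphism `f` of a vector space over an algebraically
closed field which is "unipotent" with respect to a descending chain of subspaces
`V = V₀ ⊇ V₁ ⊇ ⋯` (in the sense that `(f − id)(Vₙ) ⊆ Vₙ₊₁`) with `⋂ₙ Vₙ = 0`
is the identity. -/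
theorem semisimple_unipotent_eq_id
    (K : Type*) (V : Type*) [Field K] [IsAlgClosed K] [AddCommGroup V] [Module K V]
    (f : Module.End K V) (hf : f.IsSemisimple)
    (Vn : ℕ → Submodule K V)
    (h0 : Vn 0 = ⊤)
    (hdesc : ∀ m, Vn (m + 1) ≤ Vn m)
    (hstep : ∀ m, ∀ x ∈ Vn m, f x - x ∈ Vn (m + 1))
    (hint : (⨅ m, Vn m) = ⊥) :
    f = LinearMap.id :=
  semisimple_unipotent_eq_id_general K V f hf Vn h0 hstep hint
end

section
/- Let k be a field and 𝔤 a perfect Lie algebra over k, with counit ε : U(𝔤) → k. Then every k-algebra automorphism φ of U(𝔤) satisfies ε ∘ φ = ε; consequently φ maps ker ε onto ker ε, and φ maps Z(U(𝔤)) ∩ ker ε onto Z(U(𝔤)) ∩ ker ε, where Z(U(𝔤)) denotes the center of U(𝔤). -/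
/-!
An algebra map `U(𝔤) → A` into a commutative algebra restricts to a Lie algebra map from `𝔤`
into an abelian Lie algebra, which vanishes on `⁅𝔤, 𝔤⁆ = 𝔤`. Hence `ε` is the only algebra map
`U(𝔤) → k`, so `ε ∘ φ = ε`; and every automorphism preserves the center.
-/

attribute [local instance] LieRing.ofAssociativeRing

open LieAlgebra UniversalEnvelopingAlgebra

theorem LieHom.eq_zero_of_derivedSeries_one_eq_top {R L M : Type*} [CommRing R] [LieRing L]
    [LieAlgebra R L] [LieRing M] [LieAlgebra R M] [IsLieAbelian M]
    (hperf : derivedSeries R L 1 = ⊤) (f : L →ₗ⁅R⁆ M) : f = 0 := by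
  have hM : derivedSeries R M 1 = ⊥ := LieSubmodule.trivial_lie_oper_zero _ _
  ext x
  have hx : f x ∈ derivedSeries R M 1 :=
    LieIdeal.derivedSeries_map_le 1 (LieIdeal.mem_map (hperf ▸ LieSubmodule.mem_top x))
  simpa [hM] using hx

theorem UniversalEnvelopingAlgebra.algHom_ext_of_derivedSeries_one_eq_top {R L A : Type*}
    [CommRing R] [LieRing L] [LieAlgebra R L] [CommRing A] [Algebra R A]
    (hperf : derivedSeries R L 1 = ⊤) (g₁ g₂ : UniversalEnvelopingAlgebra R L →ₐ[R] A) :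
    g₁ = g₂ :=
  have : IsLieAbelian A := isMulCommutative_iff_isLieAbelian.mp inferInstance
  hom_ext R <| (LieHom.eq_zero_of_derivedSeries_one_eq_top hperf _).trans
    (LieHom.eq_zero_of_derivedSeries_one_eq_top hperf _).symm

theorem MulEquivClass.image_center {F M N : Type*} [EquivLike F M N] [Mul M] [Mul N]
    [MulEquivClass F M N] (e : F) : e '' Set.center M = Set.center N := by
  ext y
  obtain ⟨x, rfl⟩ := EquivLike.surjective e y
  simp [EquivLike.injective e |>.mem_set_image, MulEquivClass.apply_mem_center_iff]

theorem automorphism_preserves_augmentation_general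
    (k : Type*) (L : Type*) [Field k] [LieRing L] [LieAlgebra k L]
    (hperf : LieAlgebra.derivedSeries k L 1 = ⊤)
    (ε : UniversalEnvelopingAlgebra k L →ₐ[k] k)
    (φ : UniversalEnvelopingAlgebra k L ≃ₐ[k] UniversalEnvelopingAlgebra k L) :
    (∀ u : UniversalEnvelopingAlgebra k L, ε (φ u) = ε u) ∧
    (⇑φ '' {u | ε u = 0} = {u | ε u = 0}) ∧
    (⇑φ '' ((Subalgebra.center k (UniversalEnvelopingAlgebra k L) : Set (UniversalEnvelopingAlgebra k L)) ∩ {u | ε u = 0}) =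
      (Subalgebra.center k (UniversalEnvelopingAlgebra k L) : Set (UniversalEnvelopingAlgebra k L)) ∩ {u | ε u = 0}) := by
  have hε (e : UniversalEnvelopingAlgebra k L ≃ₐ[k] UniversalEnvelopingAlgebra k L) (u) :
      ε (e u) = ε u :=
    AlgHom.congr_fun (algHom_ext_of_derivedSeries_one_eq_top hperf (ε.comp e.toAlgHom) ε) u
  have hker : ⇑φ '' {u | ε u = 0} = {u | ε u = 0} := by
    refine (φ.toEquiv.image_eq_preimage_symm _).trans ?_
    ext u
    simp [hε φ.symm u]
  refine ⟨hε φ, hker, ?_⟩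
  rw [Set.image_inter φ.injective, hker, Subalgebra.coe_center]
  exact congrArg (· ∩ _) (MulEquivClass.image_center φ)

/-- For a perfect Lie algebra `𝔤` over a field `k` with counit
`ε : U(𝔤) → k`, every `k`-algebra automorphism `φ` of `U(𝔤)` satisfies `ε ∘ φ = ε`;
consequently `φ` maps `ker ε` onto `ker ε` and `Z(U(𝔤)) ∩ ker ε` onto
`Z(U(𝔤)) ∩ ker ε`. -/
theorem automorphism_preserves_augmentation
    (k : Type*) (L : Type*) [Field k] [LieRing L] [LieAlgebra k L]
    (hperf : LieAlgebra.derivedSeries k L 1 = ⊤)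
    (ε : UniversalEnvelopingAlgebra k L →ₐ[k] k)
    (hε : ∀ x : L, ε (UniversalEnvelopingAlgebra.ι k x) = 0)
    (φ : UniversalEnvelopingAlgebra k L ≃ₐ[k] UniversalEnvelopingAlgebra k L) :
    (∀ u : UniversalEnvelopingAlgebra k L, ε (φ u) = ε u) ∧
    (⇑φ '' {u | ε u = 0} = {u | ε u = 0}) ∧
    (⇑φ '' ((Subalgebra.center k (UniversalEnvelopingAlgebra k L) : Set (UniversalEnvelopingAlgebra k L)) ∩ {u | ε u = 0}) =
      (Subalgebra.center k (UniversalEnvelopingAlgebra k L) : Set (UniversalEnvelopingAlgebra k L)) ∩ {u | ε u = 0}) :=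
  automorphism_preserves_augmentation_general k L hperf ε φ
end

section
/- Let p be an odd prime and k = 𝔽_p = ZMod p. Let 𝔰𝔩₂(k) be the Lie algebra of trace-zero 2×2 matrices over k, with standard basis e = E₁₂, f = E₂₁, h = E₁₁ − E₂₂, and let U = U(𝔰𝔩₂(k)) with canonical embedding ι. Set E = ι(e), F = ι(f), H = ι(h), x = Eᵖ, y = Fᵖ, z = Hᵖ − H, and Δ = 4·F·E + H² + 2·H. Then in U the identity (Δ+1)ᵖ − 2·(Δ+1)^{(p+1)/2} + (Δ+1) = 4·x·y + z² holds. -/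
/-!
Put `C = 4fe + h² + 2h + 1 = 4ef + (h - 1)²`. It commutes with `h` and `f`, and `fh = (h + 2)f`,
so `f` moves to the left through a polynomial in `C` and `h` at the cost of the shift
`h ↦ h - 2`. By induction, `(4e)ⁿ fⁿ = ∏_{i<n} (C - (h - (2i + 1))²)`, a product in the
commutative subalgebra generated by `C` and `h`. For `n = p` the numbers `2i + 1` run over `𝔽_p`,
and in a commutative `𝔽_p`-algebra `∏_{a ∈ 𝔽_p} (c - (t - a)²) = cᵖ - 2c^{(p+1)/2} + c - (tᵖ - t)²`:
when `c = s²` the product splits into `∏ (s - t + a) · ∏ (s + t - a)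
= ((s - t)ᵖ - (s - t))((s + t)ᵖ - (s + t))`, and the general case follows because the
substitution `X ↦ X²` is injective on polynomials. Finally `(4e)ᵖ = 4eᵖ` as `4ᵖ = 4` in `𝔽_p`.
-/

open LieAlgebra.SpecialLinear

/-- `e = E₁₂` in `𝔰𝔩₂(ZMod p)`. -/
noncomputable def sl2e (p : ℕ) : sl (Fin 2) (ZMod p) := LieAlgebra.SpecialLinear.single 0 1 (by decide) (1 : ZMod p)

/-- `f = E₂₁` in `𝔰𝔩₂(ZMod p)`. -/
noncomputable def sl2f (p : ℕ) : sl (Fin 2) (ZMod p) := LieAlgebra.SpecialLinear.single 1 0 (by decide) (1 : ZMod p)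

/-- `h = E₁₁ − E₂₂` in `𝔰𝔩₂(ZMod p)`. -/
noncomputable def sl2h (p : ℕ) : sl (Fin 2) (ZMod p) :=
  ⟨Matrix.single 0 0 (1 : ZMod p) - Matrix.single 1 1 (1 : ZMod p),
    show _ ∈ LinearMap.ker (Matrix.traceLinearMap (Fin 2) (ZMod p) (ZMod p)) by
      rw [LinearMap.mem_ker]
      simp [Matrix.trace_sub, Matrix.trace_single_eq_same]⟩

open Polynomial Finset

theorem FiniteField.prod_X_sub_C_eq_X_pow_card_sub_X (K : Type*) [Field K] [Fintype K] :
    ∏ a : K, (X - C a) = X ^ Fintype.card K - X := by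
  have hmonic : (X ^ Fintype.card K - X : K[X]).Monic :=
    monic_X_pow_sub (by rw [degree_X]; exact_mod_cast Fintype.one_lt_card)
  have := prod_multiset_X_sub_C_of_monic_of_roots_card_eq hmonic (by
    rw [FiniteField.roots_X_pow_card_sub_X,
      FiniteField.X_pow_card_sub_X_natDegree_eq K Fintype.one_lt_card]; rfl)
  rwa [FiniteField.roots_X_pow_card_sub_X] at this

namespace ZMod

variable {p : ℕ} [Fact p.Prime] {B : Type*} [CommRing B] [Algebra (ZMod p) B]

theorem prod_sub_algebraMap (t : B) :
    ∏ a : ZMod p, (t - algebraMap (ZMod p) B a) = t ^ p - t := by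
  simpa [map_prod, ZMod.card] using
    congrArg (aeval t) (FiniteField.prod_X_sub_C_eq_X_pow_card_sub_X (ZMod p))

theorem prod_range_two_mul_add_one {M : Type*} [CommMonoid M] (hodd : Odd p) (g : ZMod p → M) :
    ∏ i ∈ range p, g (2 * i + 1) = ∏ a, g a := by
  have h2 : (2 : ZMod p) ≠ 0 := Ring.two_ne_zero <| by
    rw [ringChar_zmod_n]
    rintro rfl
    exact Nat.not_odd_iff_even.2 even_two hodd
  refine prod_nbij' (fun i ↦ (2 * i + 1 : ZMod p)) (fun a ↦ ((a - 1) / 2).val)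
    (fun _ _ ↦ mem_univ _) (fun a _ ↦ mem_range.2 (val_lt _)) (fun i hi ↦ ?_) (fun a _ ↦ ?_)
    (fun _ _ ↦ rfl)
  · rw [add_sub_cancel_right, mul_div_cancel_left₀ _ h2, val_cast_of_lt (mem_range.1 hi)]
  · rw [natCast_zmod_val, mul_div_cancel₀ _ h2, sub_add_cancel]

theorem prod_sq_sub_sq [CharP B p] (hodd : Odd p) (s t : B) :
    ∏ a : ZMod p, (s ^ 2 - (t - algebraMap (ZMod p) B a) ^ 2) =
      (s ^ 2) ^ p - 2 * (s ^ 2) ^ ((p + 1) / 2) + s ^ 2 - (t ^ p - t) ^ 2 := by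
  have hfactor (a : ZMod p) : s ^ 2 - (t - algebraMap (ZMod p) B a) ^ 2 =
      (s - t - algebraMap (ZMod p) B (-a)) * (s + t - algebraMap (ZMod p) B a) := by
    rw [map_neg]; ring
  have hneg : ∏ a : ZMod p, (s - t - algebraMap (ZMod p) B (-a)) = (s - t) ^ p - (s - t) := by
    rw [← prod_sub_algebraMap]
    exact Fintype.prod_equiv (Equiv.neg _) _ _ fun _ ↦ rfl
  have hhalf : 2 * ((p + 1) / 2) = p + 1 := Nat.two_mul_div_two_of_even hodd.add_one
  rw [prod_congr rfl fun a _ ↦ hfactor a, prod_mul_distrib, hneg, prod_sub_algebraMap,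
    sub_pow_char, add_pow_char, ← pow_mul, ← pow_mul, hhalf, mul_comm 2 p]
  ring

theorem prod_sub_sq (hodd : Odd p) (c t : B) :
    ∏ a : ZMod p, (c - (t - algebraMap (ZMod p) B a) ^ 2) =
      c ^ p - 2 * c ^ ((p + 1) / 2) + c - (t ^ p - t) ^ 2 := by
  nontriviality B
  have : CharP B p := charP_of_injective_algebraMap (algebraMap (ZMod p) B).injective p
  have key : ∏ a : ZMod p, (X - (C t - algebraMap (ZMod p) B[X] a) ^ 2) =
      X ^ p - 2 * X ^ ((p + 1) / 2) + X - (C t ^ p - C t) ^ 2 := by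
    apply expand_injective two_pos
    simpa [map_prod, map_ofNat] using prod_sq_sub_sq hodd (X : B[X]) (C t)
  simpa [eval_prod] using congrArg (eval c) key

end ZMod

section Monoid

variable {N M : Type*} [CommMonoid N] [Monoid M]

theorem SemiconjBy.map_prod_range (φ : N →* M) (x : M) {g : ℕ → N}
    (hg : ∀ i, SemiconjBy x (φ (g (i + 1))) (φ (g i))) (n : ℕ) :
    SemiconjBy x (φ (∏ i ∈ range n, g (i + 1))) (φ (∏ i ∈ range n, g i)) := by
  induction n with
  | zero => simp
  | succ n ih => simpa only [prod_range_succ, map_mul] using ih.mul_right (hg n)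

theorem pow_mul_pow_eq_map_prod_range (φ : N →* M) {u v : M} {g : ℕ → N}
    (h0 : u * v = φ (g 0)) (hg : ∀ i, SemiconjBy v (φ (g (i + 1))) (φ (g i))) (n : ℕ) :
    u ^ n * v ^ n = φ (∏ i ∈ range n, g i) := by
  induction n with
  | zero => simp
  | succ n ih =>
    calc u ^ (n + 1) * v ^ (n + 1) = u * (u ^ n * v ^ n * v) := by
          rw [pow_succ', pow_succ, mul_assoc, mul_assoc]
      _ = u * v * φ (∏ i ∈ range n, g (i + 1)) := by
          rw [ih, ← (SemiconjBy.map_prod_range φ v hg n).eq, mul_assoc]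
      _ = φ (∏ i ∈ range (n + 1), g i) := by
          rw [h0, ← map_mul, prod_range_succ', mul_comm]

end Monoid

section Sl2Triple

variable {A : Type*} [Ring A] {e f h : A}

def sl2Casimir (e f h : A) : A := 4 * f * e + h ^ 2 + 2 * h + 1

theorem sl2Casimir_commute_h (hhe : h * e - e * h = 2 * e) (hhf : h * f - f * h = -(2 * f)) :
    Commute (sl2Casimir e f h) h := by
  rw [Commute, SemiconjBy, ← sub_eq_zero]
  calc sl2Casimir e f h * h - h * sl2Casimir e f h
        = -4 * (f * (h * e - e * h - 2 * e) + (h * f - f * h + 2 * f) * e) := by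
          unfold sl2Casimir; noncomm_ring
    _ = 0 := by rw [hhe, hhf]; noncomm_ring

theorem sl2Casimir_commute_f (hef : e * f - f * e = h) (hhf : h * f - f * h = -(2 * f)) :
    Commute (sl2Casimir e f h) f := by
  rw [Commute, SemiconjBy, ← sub_eq_zero]
  calc sl2Casimir e f h * f - f * sl2Casimir e f h
        = 4 * f * (e * f - f * e - h) + h * (h * f - f * h + 2 * f) +
            (h * f - f * h + 2 * f) * h := by
          unfold sl2Casimir; noncomm_ring
    _ = 0 := by rw [hef, hhf]; noncomm_ring

theorem four_mul_mul_eq_sl2Casimir_sub (hef : e * f - f * e = h) :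
    4 * e * f = sl2Casimir e f h - (h - 1) ^ 2 := by
  rw [← sub_eq_zero]
  calc 4 * e * f - (sl2Casimir e f h - (h - 1) ^ 2) = 4 * (e * f - f * e - h) := by
        unfold sl2Casimir; noncomm_ring
    _ = 0 := by rw [hef, sub_self, mul_zero]

theorem semiconjBy_sl2Casimir_sub_sq {R : Type*} [CommRing R] [Algebra R A]
    (hef : e * f - f * e = h) (hhf : h * f - f * h = -(2 * f)) (a : R) :
    SemiconjBy f (sl2Casimir e f h - (h - algebraMap R A (a + 2)) ^ 2)
      (sl2Casimir e f h - (h - algebraMap R A a) ^ 2) := by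
  have hfh : SemiconjBy f h (h + 2) := by
    rw [SemiconjBy, ← sub_eq_zero]
    calc f * h - (h + 2) * f = -(h * f - f * h + 2 * f) := by noncomm_ring
      _ = 0 := by rw [hhf]; noncomm_ring
  have hshift : SemiconjBy f (h - algebraMap R A (a + 2)) (h - algebraMap R A a) := by
    convert hfh.sub_right (Algebra.commute_algebraMap_right (a + 2) f) using 1
    rw [map_add, map_ofNat]; abel
  exact SemiconjBy.sub_right (sl2Casimir_commute_f hef hhf).symm (hshift.pow_right 2)

open scoped IsMulCommutative in
theorem sl2Casimir_relation {p : ℕ} [Fact p.Prime] (hodd : Odd p) [Algebra (ZMod p) A]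
    (hef : e * f - f * e = h) (hhe : h * e - e * h = 2 * e)
    (hhf : h * f - f * h = -(2 * f)) :
    sl2Casimir e f h ^ p - 2 * sl2Casimir e f h ^ ((p + 1) / 2) + sl2Casimir e f h =
      4 * e ^ p * f ^ p + (h ^ p - h) ^ 2 := by
  let S := Algebra.adjoin (ZMod p) {sl2Casimir e f h, h}
  have : IsMulCommutative S := Algebra.isMulCommutative_adjoin (ZMod p) <| by
    have := sl2Casimir_commute_h hhe hhf
    simp only [Set.mem_insert_iff, Set.mem_singleton_iff]
    rintro x (rfl | rfl) y (rfl | rfl) <;> first | rfl | exact this.eq | exact this.eq.symm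
  let c : S := ⟨sl2Casimir e f h, Algebra.subset_adjoin (by simp)⟩
  let t : S := ⟨h, Algebra.subset_adjoin (by simp)⟩
  have hprod : (4 * e) ^ p * f ^ p =
      S.val (∏ i ∈ range p, (c - (t - algebraMap (ZMod p) S (2 * i + 1)) ^ 2)) := by
    refine pow_mul_pow_eq_map_prod_range (S.val : S →* A) ?_ (fun i ↦ ?_) p
    · simpa using four_mul_mul_eq_sl2Casimir_sub hef
    · have hstep : 2 * ((i + 1 : ℕ) : ZMod p) + 1 = 2 * i + 1 + 2 := by push_cast; ring
      have := semiconjBy_sl2Casimir_sub_sq hef hhf (2 * i + 1 : ZMod p)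
      rw [← hstep] at this
      simpa [c, t] using this
  have h4 : (4 * e) ^ p = 4 * e ^ p := by
    rw [(Commute.ofNat_left 4 e).mul_pow, ← map_ofNat (algebraMap (ZMod p) A), ← map_pow,
      ZMod.pow_card]
  rw [ZMod.prod_range_two_mul_add_one hodd (fun a ↦ c - (t - algebraMap (ZMod p) S a) ^ 2),
    ZMod.prod_sub_sq hodd, h4] at hprod
  simp only [map_sub, map_add, map_mul, map_pow, map_ofNat] at hprod
  rw [hprod]
  exact (sub_add_cancel _ _).symm

end Sl2Triple

section

attribute [local instance 100] LieRing.ofAssociativeRing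

theorem UniversalEnvelopingAlgebra.ι_mul_sub_mul {R L : Type*} [CommRing R] [LieRing L]
    [LieAlgebra R L] (x y : L) : ι R x * ι R y - ι R y * ι R x = ι R ⁅x, y⁆ :=
  ((ι R).map_lie x y).symm

end

theorem lie_sl2e_sl2f (p : ℕ) : ⁅sl2e p, sl2f p⁆ = sl2h p := by
  ext i j
  fin_cases i <;> fin_cases j <;> simp [sl2e, sl2f, sl2h, Ring.lie_def]

theorem lie_sl2h_sl2e (p : ℕ) : ⁅sl2h p, sl2e p⁆ = 2 • sl2e p := by
  ext i j
  fin_cases i <;> fin_cases j <;> norm_num [sl2e, sl2h, Ring.lie_def]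

theorem lie_sl2h_sl2f (p : ℕ) : ⁅sl2h p, sl2f p⁆ = -(2 • sl2f p) := by
  ext i j
  fin_cases i <;> fin_cases j <;> norm_num [sl2f, sl2h, Ring.lie_def]

/-- In `U(𝔰𝔩₂(𝔽_p))` for an odd prime `p`, with `x = Eᵖ`, `y = Fᵖ`,
`z = Hᵖ − H` and `Δ = 4FE + H² + 2H`, one has
`(Δ+1)ᵖ − 2(Δ+1)^{(p+1)/2} + (Δ+1) = 4xy + z²`. -/
theorem sl2_center_relation (p : ℕ) (hp : p.Prime) (hodd : Odd p) :
    letI U := UniversalEnvelopingAlgebra (ZMod p) (sl (Fin 2) (ZMod p))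
    letI ι := UniversalEnvelopingAlgebra.ι (ZMod p) (L := sl (Fin 2) (ZMod p))
    letI E : U := ι (sl2e p)
    letI F : U := ι (sl2f p)
    letI H : U := ι (sl2h p)
    letI x : U := E ^ p
    letI y : U := F ^ p
    letI z : U := H ^ p - H
    letI Δ : U := 4 * F * E + H ^ 2 + 2 * H
    (Δ + 1) ^ p - 2 * (Δ + 1) ^ ((p + 1) / 2) + (Δ + 1) = 4 * x * y + z ^ 2 := by
  have : Fact p.Prime := ⟨hp⟩
  let ι := UniversalEnvelopingAlgebra.ι (ZMod p) (L := sl (Fin 2) (ZMod p))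
  have hef : ι (sl2e p) * ι (sl2f p) - ι (sl2f p) * ι (sl2e p) = ι (sl2h p) := by
    rw [UniversalEnvelopingAlgebra.ι_mul_sub_mul, lie_sl2e_sl2f]
  have hhe : ι (sl2h p) * ι (sl2e p) - ι (sl2e p) * ι (sl2h p) = 2 * ι (sl2e p) := by
    rw [UniversalEnvelopingAlgebra.ι_mul_sub_mul, lie_sl2h_sl2e, map_nsmul, two_nsmul, two_mul]
  have hhf : ι (sl2h p) * ι (sl2f p) - ι (sl2f p) * ι (sl2h p) = -(2 * ι (sl2f p)) := by
    rw [UniversalEnvelopingAlgebra.ι_mul_sub_mul, lie_sl2h_sl2f, map_neg, map_nsmul, two_nsmul,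
      two_mul]
  exact sl2Casimir_relation hodd hef hhe hhf
end
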